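/- Let C_n be the cycle graph on n ≥ 3 vertices with the shortest-path metric. Then the least doubling constant over all measures giving positive mass to each vertex equals 3: every such measure μ satisfies C_μ ≥ 3, and the counting measure achieves C_μ = 3. -/

import Mathlib

open MeasureTheory Metric Filter

noncomputable def doublingConstant {X : Type*} [PseudoMetricSpace X] [MeasurableSpace X]
    (μ : Measure X) : ENNReal :=
  ⨆ (x : X) (r : ℝ) (_ : 0 < r), μ (ball x (2 * r)) / μ (ball x r)

/-!
Through `x`, the space is the cycle on `Fin n`, in which `x j ∈ ball (x i) r` iff the cyclic
norm of `j - i` is `< r`. Lower bound: at a vertex `a` of least mass the ball of radius `1` is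
`{a}`, while the ball of radius `2` contains `a` and its two neighbours, each of mass at least
`μ {a}`. Upper bound for the counting measure: with `m = ⌈r⌉₊`, the ball of radius `2r` is covered
by the balls of radius `r` centred at `a` and at the two vertices at distance `m` from `a`, and all
balls of a given radius have the same cardinality by rotation invariance.
-/

open scoped ENNReal
open Finset

section DoublingConstant

variable {X : Type*} [PseudoMetricSpace X] [MeasurableSpace X] (μ : Measure X)

theorem div_le_doublingConstant (a : X) {r : ℝ} (hr : 0 < r) :
    μ (ball a (2 * r)) / μ (ball a r) ≤ doublingConstant μ :=
  le_iSup_of_le a <| le_iSup_of_le r <| le_iSup_of_le hr le_rfl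

theorem doublingConstant_le {C : ℝ≥0∞}
    (h : ∀ a r, 0 < r → μ (ball a (2 * r)) ≤ C * μ (ball a r)) : doublingConstant μ ≤ C :=
  iSup_le fun a => iSup₂_le fun r hr => ENNReal.div_le_of_le_mul (h a r hr)

theorem card_le_doublingConstant [MeasurableSingletonClass X] {a : X} {r : ℝ} (hr : 0 < r)
    (hball : ball a r = {a}) (ha₀ : μ {a} ≠ 0) (ha : μ {a} ≠ ∞) {s : Finset X}
    (hs : (s : Set X) ⊆ ball a (2 * r)) (hmin : ∀ b ∈ s, μ {a} ≤ μ {b}) :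
    (#s : ℝ≥0∞) ≤ doublingConstant μ := by
  refine le_trans ?_ (div_le_doublingConstant μ a hr)
  rw [hball, ENNReal.le_div_iff_mul_le (Or.inl ha₀) (Or.inl ha)]
  calc (#s : ℝ≥0∞) * μ {a} = #s • μ {a} := (nsmul_eq_mul _ _).symm
    _ ≤ ∑ b ∈ s, μ {b} := card_nsmul_le_sum s _ _ hmin
    _ = μ s := sum_measure_singleton
    _ ≤ μ (ball a (2 * r)) := measure_mono hs

end DoublingConstant

namespace Fin

variable {n : ℕ}

/-- The graph distance from `0` to `k` in the cycle on `Fin n`. -/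
def cycleNorm (k : Fin n) : ℕ := min k.val (n - k.val)

theorem min_natAbs_sub_eq_cycleNorm (i j : Fin n) :
    min ((i : ℤ) - j).natAbs (n - ((i : ℤ) - j).natAbs) = (i - j).cycleNorm := by
  unfold cycleNorm
  rcases le_or_gt j i with h | h
  · rw [coe_sub_iff_le.mpr h]
    omega
  · rw [coe_sub_iff_lt.mpr h]
    omega

theorem cycleNorm_eq_zero_iff [NeZero n] {k : Fin n} : k.cycleNorm = 0 ↔ k = 0 := by
  rw [cycleNorm, Fin.ext_iff, val_zero]
  omega

@[simp]
theorem cycleNorm_zero [NeZero n] : (0 : Fin n).cycleNorm = 0 :=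
  cycleNorm_eq_zero_iff.mpr rfl

@[simp]
theorem cycleNorm_neg [NeZero n] (k : Fin n) : (-k).cycleNorm = k.cycleNorm := by
  unfold cycleNorm
  rw [val_neg]
  split_ifs with h
  · simp [h]
  · omega

theorem cycleNorm_one_le [NeZero n] : (1 : Fin n).cycleNorm ≤ 1 :=
  (min_le_left _ _).trans ((val_one' n).trans_le (Nat.mod_le 1 n))

theorem cycleNorm_sub_ofNat_lt {m : ℕ} {k : Fin n} [NeZero n] (hm : m ≤ k.val)
    (hk : k.val < 2 * m) : (k - Fin.ofNat n m).cycleNorm < m := by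
  have hmn : (Fin.ofNat n m).val = m := by rw [val_ofNat, Nat.mod_eq_of_lt (hm.trans_lt k.isLt)]
  rw [cycleNorm, coe_sub_iff_le.mpr (by rwa [le_def, hmn]), hmn]
  omega

theorem cycleNorm_lt_or_of_lt_two_mul [NeZero n] {m : ℕ} {k : Fin n}
    (h : k.cycleNorm < 2 * m) :
    k.cycleNorm < m ∨ (k - Fin.ofNat n m).cycleNorm < m ∨ (k + Fin.ofNat n m).cycleNorm < m := by
  by_cases hk : k.cycleNorm < m
  · exact Or.inl hk
  unfold cycleNorm at h hk
  by_cases hk₂ : k.val < 2 * m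
  · exact Or.inr (Or.inl (cycleNorm_sub_ofNat_lt (by omega) hk₂))
  -- the remaining case `n - k < 2m` is the previous one applied to `-k`
  have hk₀ : k ≠ 0 := by rw [Ne, Fin.ext_iff, val_zero]; omega
  have hneg : (-k).val = n - k.val := by rw [val_neg, if_neg hk₀]
  refine Or.inr (Or.inr ?_)
  rw [← cycleNorm_neg, neg_add, ← sub_eq_add_neg]
  exact cycleNorm_sub_ofNat_lt (by omega) (by omega)

end Fin

open Fin

noncomputable def cycleBall (n : ℕ) (r : ℝ) : Finset (Fin n) := {k | (k.cycleNorm : ℝ) < r}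

theorem mem_cycleBall {n : ℕ} {r : ℝ} {k : Fin n} :
    k ∈ cycleBall n r ↔ (k.cycleNorm : ℝ) < r := by
  simp [cycleBall]

theorem cycleBall_one (n : ℕ) [NeZero n] : cycleBall n 1 = {0} := by
  ext k
  rw [mem_cycleBall, Nat.cast_lt_one, cycleNorm_eq_zero_iff, mem_singleton]

theorem neg_one_zero_one_subset_cycleBall_two (n : ℕ) [NeZero n] :
    ({-1, 0, 1} : Finset (Fin n)) ⊆ cycleBall n 2 := by
  have h₁ : ((1 : Fin n).cycleNorm : ℝ) < 2 := by
    exact_mod_cast cycleNorm_one_le.trans_lt one_lt_two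
  intro k hk
  simp only [mem_insert, mem_singleton] at hk
  rcases hk with rfl | rfl | rfl <;> simp [mem_cycleBall, h₁]

theorem card_neg_one_zero_one {n : ℕ} [NeZero n] (hn : 3 ≤ n) :
    #({-1, 0, 1} : Finset (Fin n)) = 3 := by
  have h₁ : (1 : Fin n).val = 1 := by rw [val_one', Nat.mod_eq_of_lt (by omega)]
  have h₀ : (1 : Fin n) ≠ 0 := by rw [Ne, Fin.ext_iff, h₁, val_zero]; exact one_ne_zero
  have hneg : (-1 : Fin n).val = n - 1 := by rw [val_neg, if_neg h₀, h₁]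
  refine card_eq_three.mpr ⟨-1, 0, 1, neg_ne_zero.mpr h₀, ?_, h₀.symm, rfl⟩
  rw [Ne, Fin.ext_iff, hneg, h₁]
  omega

theorem card_cycleBall_two_mul_le {n : ℕ} [NeZero n] (r : ℝ) :
    #(cycleBall n (2 * r)) ≤ 3 * #(cycleBall n r) := by
  set m := ⌈r⌉₊
  set t := Fin.ofNat n m
  set B := cycleBall n r
  have hB : ∀ k, k ∈ B ↔ k.cycleNorm < m := fun k => mem_cycleBall.trans Nat.lt_ceil.symm
  have hcover : cycleBall n (2 * r) ⊆ B ∪ (B.image (· + t) ∪ B.image (· - t)) := by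
    intro k hk
    have hlt : k.cycleNorm < 2 * m := by
      have := (mem_cycleBall.mp hk).trans_le
        (mul_le_mul_of_nonneg_left (Nat.le_ceil r) zero_le_two)
      exact_mod_cast this
    simp only [mem_union, mem_image]
    rcases cycleNorm_lt_or_of_lt_two_mul hlt with h | h | h
    · exact Or.inl ((hB k).mpr h)
    · exact Or.inr (Or.inl ⟨k - t, (hB _).mpr h, sub_add_cancel k t⟩)
    · exact Or.inr (Or.inr ⟨k + t, (hB _).mpr h, add_sub_cancel_right k t⟩)
  calc #(cycleBall n (2 * r))
      ≤ #B + (#(B.image (· + t)) + #(B.image (· - t))) :=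
        (card_le_card hcover).trans <| (card_union_le _ _).trans <|
          Nat.add_le_add_left (card_union_le _ _) _
    _ ≤ 3 * #B := by
        have := card_image_le (s := B) (f := (· + t))
        have := card_image_le (s := B) (f := (· - t))
        omega

section CycleGraph

variable {X : Type*} [PseudoMetricSpace X] {n : ℕ} [NeZero n] {x : Fin n → X}
  (hx : ∀ i j, dist (x i) (x j) = (i - j).cycleNorm)
include hx

theorem ball_eq_image_cycleBall (hsurj : Function.Surjective x) (i : Fin n) (r : ℝ) :
    ball (x i) r = (fun k => x (k + i)) '' cycleBall n r := by
  ext y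
  obtain ⟨j, rfl⟩ := hsurj y
  constructor
  · intro h
    refine ⟨j - i, ?_, congrArg x (sub_add_cancel j i)⟩
    rwa [mem_coe, mem_cycleBall, ← hx, ← mem_ball]
  · rintro ⟨k, hk, hkj⟩
    simp only at hkj
    rwa [← hkj, mem_ball, hx, add_sub_cancel_right, ← mem_cycleBall]

variable [MeasurableSpace X] [MeasurableSingletonClass X]

theorem count_ball_eq_card_cycleBall (hbij : Function.Bijective x) (i : Fin n)
    (r : ℝ) : Measure.count (ball (x i) r) = #(cycleBall n r) := by
  have hinj : Function.Injective fun k => x (k + i) := hbij.1.comp (add_left_injective i)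
  rw [ball_eq_image_cycleBall hx hbij.2, Measure.count_injective_image hinj,
    Measure.count_apply_finset]

theorem doublingConstant_count_le_three (hbij : Function.Bijective x) :
    doublingConstant (Measure.count : Measure X) ≤ 3 := by
  refine doublingConstant_le _ fun a r _ => ?_
  obtain ⟨i, rfl⟩ := hbij.2 a
  rw [count_ball_eq_card_cycleBall hx hbij, count_ball_eq_card_cycleBall hx hbij]
  exact_mod_cast card_cycleBall_two_mul_le r

theorem three_le_doublingConstant (hn : 3 ≤ n) (hbij : Function.Bijective x) (μ : Measure X)
    [IsFiniteMeasure μ] (hpos : ∀ a, 0 < μ {a}) : 3 ≤ doublingConstant μ := by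
  obtain ⟨i, hmin⟩ := Finite.exists_min fun i => μ {x i}
  have hball : ∀ r, ball (x i) r = (fun k => x (k + i)) '' cycleBall n r :=
    ball_eq_image_cycleBall hx hbij.2 i
  let e : Fin n ↪ X := ⟨fun k => x (k + i), hbij.1.comp (add_left_injective i)⟩
  have hs := card_le_doublingConstant μ one_pos (a := x i)
    (by rw [hball, cycleBall_one, coe_singleton, Set.image_singleton, zero_add])
    (hpos _).ne' (measure_ne_top μ _) (s := ({-1, 0, 1} : Finset (Fin n)).map e)
    (by
      rw [mul_one, hball, coe_map]
      exact Set.image_mono (coe_subset.mpr (neg_one_zero_one_subset_cycleBall_two n)))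
    (by
      rintro _ hb
      obtain ⟨k, -, rfl⟩ := mem_map.mp hb
      exact hmin _)
  rwa [card_map, card_neg_one_zero_one hn] at hs

end CycleGraph

theorem stmt_18 {X : Type*} [MetricSpace X] [MeasurableSpace X] [BorelSpace X]
    (n : ℕ) (hn : 3 ≤ n) (x : Fin n → X) (hbij : Function.Bijective x)
    (hdist : ∀ i j : Fin n,
      dist (x i) (x j) =
        (min ((i.val : ℤ) - j.val).natAbs (n - ((i.val : ℤ) - j.val).natAbs) : ℕ)) :
    (∀ μ : Measure X, (∀ a : X, 0 < μ {a}) → μ Set.univ < ⊤ →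
      (3 : ENNReal) ≤ doublingConstant μ) ∧
    doublingConstant (Measure.count : Measure X) = 3 := by
  have : NeZero n := ⟨by omega⟩
  have hx : ∀ i j, dist (x i) (x j) = (i - j).cycleNorm := fun i j => by
    rw [hdist, min_natAbs_sub_eq_cycleNorm]
  have hlower : ∀ μ : Measure X, (∀ a : X, 0 < μ {a}) → μ Set.univ < ⊤ →
      (3 : ENNReal) ≤ doublingConstant μ := fun μ hpos hfin =>
    have : IsFiniteMeasure μ := ⟨hfin⟩
    three_le_doublingConstant hx hn hbij μ hpos
  have : Finite X := Finite.of_surjective x hbij.2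
  exact ⟨hlower, le_antisymm (doublingConstant_count_le_three hx hbij)
    (hlower _ (fun a => by simp) (Measure.count_apply_lt_top.mpr Set.finite_univ))⟩
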